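/- For every t ∈ {1,…,T}, every pair of adjacent positions j, j+1 with 1 ≤ j ≤ n−1, every fixed choice of the other n−2 coordinates in [0,1], and all x, y ∈ [0,1], the following swap identity holds: W_t(…, y, x, …) − W_t(…, x, y, …) = (x − y) · [ W_t(…, 0, 1, …) − W_t(…, 1, 0, …) ], where in each expression the displayed entries occupy positions j and j+1 and the remaining coordinates are unchanged. -/
import Mathlib


open Finset

noncomputable section

/-- The one-step belief update for an unobserved channel. -/
def tauF (p01 p11 : ℝ) (w : ℝ) : ℝ := w * p11 + (1 - w) * p01

/-- The set of admissible actions: subsets of `Fin n` of cardinality `k`. -/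
def actions (n k : ℕ) : Finset (Finset (Fin n)) :=
  (Finset.univ : Finset (Fin n)).powersetCard k

lemma actions_nonempty {n k : ℕ} (hk : k ≤ n) : (actions n k).Nonempty := by
  rw [actions, Finset.powersetCard_nonempty, Finset.card_univ, Fintype.card_fin]
  exact hk

/-- Number of `true` entries in a `{0,1}^k` realization. -/
def countTrue {k : ℕ} (l : Fin k → Bool) : ℕ :=
  (Finset.univ.filter fun i => l i = true).card

/-- `q(l; u) = ∏ u_i^{l_i} (1-u_i)^{1-l_i}`. -/
def qProb {k : ℕ} (u : Fin k → ℝ) (l : Fin k → Bool) : ℝ :=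
  ∏ i : Fin k, if l i then u i else 1 - u i

/-- The top `k` coordinates `(ω_{n-k+1}, …, ω_n)` of a length-`n` vector. -/
def topCoords {n k : ℕ} (hk : k ≤ n) (ω : Fin n → ℝ) : Fin k → ℝ :=
  fun i => ω ⟨n - k + i.val, by omega⟩

/-- The vector `v_l`: `k - m` copies of `p01`, then `τ(ω_1),…,τ(ω_{n-k})`,
then `m` copies of `p11`, where `m` is the number of ones in `l`. -/
def vl {n : ℕ} (k : ℕ) (p01 p11 : ℝ) (ω : Fin n → ℝ) (m : ℕ) : Fin n → ℝ :=
  fun j =>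
    if j.val < k - m then p01
    else if j.val < n - m then tauF p01 p11 (ω ⟨j.val - (k - m), by omega⟩)
    else p11

/-- The greedy-policy value functions `W`, indexed by the number of remaining
steps (`r = 0` corresponds to the terminal time `T`). -/
def Wval (n k : ℕ) (hk : k ≤ n) (p01 p11 β : ℝ) : ℕ → (Fin n → ℝ) → ℝ
  | 0, ω => ∑ i : Fin n, if n - k ≤ i.val then ω i else 0
  | r + 1, ω =>
      (∑ i : Fin n, if n - k ≤ i.val then ω i else 0) +
        β * ∑ l : Fin k → Bool,
          qProb (topCoords hk ω) l *
            Wval n k hk p01 p11 β r (vl k p01 p11 ω (countTrue l))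

/-- The updated information state `ω^{a,s}`. -/
def nextState {n : ℕ} (p01 p11 : ℝ) (ω : Fin n → ℝ) (a : Finset (Fin n))
    (s : {i // i ∈ a} → Bool) : Fin n → ℝ :=
  fun j => if h : j ∈ a then (if s ⟨j, h⟩ then p11 else p01) else tauF p01 p11 (ω j)

/-- The probability of the realization `s` of the selected channels `a`. -/
def obsProb {n : ℕ} (ω : Fin n → ℝ) (a : Finset (Fin n))
    (s : {i // i ∈ a} → Bool) : ℝ :=
  ∏ i : {i // i ∈ a}, if s i then ω i.val else 1 - ω i.val

/-- The optimal value functions `V`, indexed by the number of remaining steps. -/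
def Vval (n k : ℕ) (hk : k ≤ n) (p01 p11 β : ℝ) : ℕ → (Fin n → ℝ) → ℝ
  | 0, ω => (actions n k).sup' (actions_nonempty hk) fun a => ∑ i ∈ a, ω i
  | r + 1, ω =>
      (actions n k).sup' (actions_nonempty hk) fun a =>
        (∑ i ∈ a, ω i) +
          β * ∑ s : {i // i ∈ a} → Bool,
            obsProb ω a s * Vval n k hk p01 p11 β r (nextState p01 p11 ω a s)

/-- `Q_t(ω, a)`: the value of taking action `a` now and acting optimally
afterwards, indexed by the number of remaining steps. -/
def Qval (n k : ℕ) (hk : k ≤ n) (p01 p11 β : ℝ) : ℕ → (Fin n → ℝ) → Finset (Fin n) → ℝ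
  | 0, ω, a => ∑ i ∈ a, ω i
  | r + 1, ω, a =>
      (∑ i ∈ a, ω i) +
        β * ∑ s : {i // i ∈ a} → Bool,
          obsProb ω a s * Vval n k hk p01 p11 β r (nextState p01 p11 ω a s)

/-- Replace the coordinates in positions `j` and `j+1` (`0`-indexed) by `x` and `y`. -/
def upd2 {n : ℕ} (ω : Fin n → ℝ) (j : ℕ) (hj : j + 1 < n) (x y : ℝ) : Fin n → ℝ :=
  Function.update (Function.update ω ⟨j, by omega⟩ x) ⟨j + 1, hj⟩ y

/-- The cyclic shift `(ω_2, …, ω_n, ω_1)`. -/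
def cyc {n : ℕ} (hn : 0 < n) (ω : Fin n → ℝ) : Fin n → ℝ :=
  fun j => ω ⟨(j.val + 1) % n, Nat.mod_lt _ hn⟩

end

section SwapAux

/-- A function `ℝ → ℝ` is affine. -/
def IsAff (g : ℝ → ℝ) : Prop := ∀ x, g x = g 0 + x * (g 1 - g 0)

lemma IsAff.const (c : ℝ) : IsAff (fun _ => c) := by intro x; ring

lemma IsAff.add {g h : ℝ → ℝ} (hg : IsAff g) (hh : IsAff h) :
    IsAff (fun x => g x + h x) := by
  intro x
  have h1 := hg x; have h2 := hh x
  show g x + h x = (g 0 + h 0) + x * ((g 1 + h 1) - (g 0 + h 0))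
  linear_combination h1 + h2

lemma IsAff.const_mul (c : ℝ) {g : ℝ → ℝ} (hg : IsAff g) :
    IsAff (fun x => c * g x) := by
  intro x
  show c * g x = c * g 0 + x * (c * g 1 - c * g 0)
  linear_combination c * hg x

lemma IsAff.mul_const (c : ℝ) {g : ℝ → ℝ} (hg : IsAff g) :
    IsAff (fun x => g x * c) := by
  intro x
  show g x * c = g 0 * c + x * (g 1 * c - g 0 * c)
  linear_combination c * hg x

lemma IsAff.sum {ι : Type*} (s : Finset ι) (f : ι → ℝ → ℝ)
    (h : ∀ i ∈ s, IsAff (f i)) : IsAff (fun x => ∑ i ∈ s, f i x) := by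
  classical
  revert h
  induction s using Finset.induction_on with
  | empty => intro _; simpa using IsAff.const 0
  | @insert a s hni ih =>
      intro h
      have he : (fun x => ∑ i ∈ insert a s, f i x)
          = fun x => f a x + ∑ i ∈ s, f i x := by
        funext x; rw [Finset.sum_insert hni]
      rw [he]
      exact (h a (Finset.mem_insert_self a s)).add
        (ih fun i hi => h i (Finset.mem_insert_of_mem hi))

lemma IsAff.comp_tau {g : ℝ → ℝ} (hg : IsAff g) (p01 p11 : ℝ) :
    IsAff (fun x => g (tauF p01 p11 x)) := by
  intro x
  show g (tauF p01 p11 x) = g (tauF p01 p11 0) + x * (g (tauF p01 p11 1) - g (tauF p01 p11 0))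
  rw [hg (tauF p01 p11 x), hg (tauF p01 p11 0), hg (tauF p01 p11 1)]
  simp only [tauF]; ring

lemma countTrue_le {k : ℕ} (l : Fin k → Bool) : countTrue l ≤ k :=
  le_trans (Finset.card_filter_le _ _) (by simp)

lemma Ssum_aff (n k : ℕ) (i : Fin n) (ω : Fin n → ℝ) :
    IsAff (fun x => ∑ i' : Fin n,
      if n - k ≤ i'.val then Function.update ω i x i' else 0) := by
  have key : ∀ c : ℝ,
      (∑ i' : Fin n, if n - k ≤ i'.val then Function.update ω i c i' else 0)
        = (∑ i' ∈ Finset.univ.erase i, if n - k ≤ i'.val then ω i' else 0)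
          + (if n - k ≤ i.val then c else 0) := by
    intro c
    rw [← Finset.sum_erase_add _ _ (Finset.mem_univ i)]
    congr 1
    · exact Finset.sum_congr rfl fun i' hi' => by
        rw [Function.update_of_ne (Finset.ne_of_mem_erase hi')]
    · simp [Function.update_self]
  intro x
  simp only [key]
  split_ifs <;> ring

lemma qProb_aff {k : ℕ} (u : Fin k → ℝ) (i' : Fin k) (l : Fin k → Bool) :
    IsAff (fun x => qProb (Function.update u i' x) l) := by
  have key : ∀ c : ℝ, qProb (Function.update u i' c) l
      = (if l i' then c else 1 - c)
        * ∏ i'' ∈ Finset.univ.erase i', (if l i'' then u i'' else 1 - u i'') := by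
    intro c
    rw [qProb, ← Finset.mul_prod_erase _ _ (Finset.mem_univ i')]
    congr 1
    · simp [Function.update_self]
    · exact Finset.prod_congr rfl fun i'' hi'' => by
        rw [Function.update_of_ne (Finset.ne_of_mem_erase hi'')]
  intro x
  simp only [key]
  split_ifs <;> ring

lemma top_update_low {n k : ℕ} (hk : k ≤ n) (i : Fin n) (hi : i.val < n - k)
    (ω : Fin n → ℝ) (x : ℝ) :
    topCoords hk (Function.update ω i x) = topCoords hk ω := by
  funext i'
  simp only [topCoords]
  rw [Function.update_of_ne]
  simp only [Ne, Fin.ext_iff, Fin.val_mk]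
  omega

lemma top_update_high {n k : ℕ} (hk : k ≤ n) (i : Fin n) (hi : n - k ≤ i.val)
    (ω : Fin n → ℝ) (x : ℝ) :
    topCoords hk (Function.update ω i x)
      = Function.update (topCoords hk ω) ⟨i.val - (n - k), by omega⟩ x := by
  have hin : i.val < n := i.isLt
  funext i'
  by_cases h : n - k + i'.val = i.val
  · have h1 : (⟨n - k + i'.val, by omega⟩ : Fin n) = i := Fin.ext h
    have h2 : i' = (⟨i.val - (n - k), by omega⟩ : Fin k) := Fin.ext (by show i'.val = i.val - (n - k); omega)
    show Function.update ω i x ⟨n - k + i'.val, _⟩ = _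
    rw [h1, Function.update_self, h2, Function.update_self]
  · have h1 : (⟨n - k + i'.val, by omega⟩ : Fin n) ≠ i := by
      simp only [Ne, Fin.ext_iff, Fin.val_mk]; omega
    have h2 : i' ≠ (⟨i.val - (n - k), by omega⟩ : Fin k) := by
      simp only [Ne, Fin.ext_iff, Fin.val_mk]; omega
    show Function.update ω i x ⟨n - k + i'.val, _⟩ = _
    rw [Function.update_of_ne h1, Function.update_of_ne h2]
    rfl

lemma vl_update_high {n k : ℕ} (hk : k ≤ n) (p01 p11 : ℝ) (i : Fin n)
    (hi : n - k ≤ i.val) (ω : Fin n → ℝ) (x : ℝ) (m : ℕ) (hm : m ≤ k) :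
    vl k p01 p11 (Function.update ω i x) m = vl k p01 p11 ω m := by
  funext jf
  simp only [vl]
  split_ifs with h1 h2
  · rfl
  · congr 1
    rw [Function.update_of_ne]
    simp only [Ne, Fin.ext_iff, Fin.val_mk]
    omega
  · rfl

lemma vl_update_low {n k : ℕ} (hk : k ≤ n) (p01 p11 : ℝ) (i : Fin n)
    (hi : i.val < n - k) (ω : Fin n → ℝ) (x : ℝ) (m : ℕ) (hm : m ≤ k) :
    vl k p01 p11 (Function.update ω i x) m
      = Function.update (vl k p01 p11 ω m) ⟨i.val + (k - m), by omega⟩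
          (tauF p01 p11 x) := by
  funext jf
  by_cases h : jf.val = i.val + (k - m)
  · have he : jf = (⟨i.val + (k - m), by omega⟩ : Fin n) := Fin.ext h
    rw [he, Function.update_self]
    show (if i.val + (k - m) < k - m then p01
      else if i.val + (k - m) < n - m then
        tauF p01 p11 (Function.update ω i x ⟨i.val + (k - m) - (k - m), by omega⟩)
      else p11) = tauF p01 p11 x
    rw [if_neg (by omega), if_pos (by omega)]
    congr 1
    have h2 : (⟨i.val + (k - m) - (k - m), by omega⟩ : Fin n) = i := Fin.ext (by show i.val + (k - m) - (k - m) = i.val; omega)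
    rw [h2, Function.update_self]
  · rw [Function.update_of_ne (by simp only [Ne, Fin.ext_iff, Fin.val_mk]; omega)]
    simp only [vl]
    split_ifs with h1 h2
    · rfl
    · congr 1
      rw [Function.update_of_ne]
      simp only [Ne, Fin.ext_iff, Fin.val_mk]
      omega
    · rfl

lemma W_aff (n k : ℕ) (hk : k ≤ n) (p01 p11 β : ℝ) :
    ∀ (r : ℕ) (i : Fin n) (ω : Fin n → ℝ),
      IsAff (fun x => Wval n k hk p01 p11 β r (Function.update ω i x)) := by
  intro r
  induction r with
  | zero =>
      intro i ω
      simpa only [Wval] using Ssum_aff n k i ω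
  | succ r ih =>
      intro i ω
      by_cases hi : i.val < n - k
      · have htop : ∀ x : ℝ, topCoords hk (Function.update ω i x) = topCoords hk ω :=
          fun x => top_update_low hk i hi ω x
        have hvl : ∀ (x : ℝ) (l : Fin k → Bool),
            vl k p01 p11 (Function.update ω i x) (countTrue l)
              = Function.update (vl k p01 p11 ω (countTrue l))
                  ⟨i.val + (k - countTrue l), by
                    have := countTrue_le l; omega⟩ (tauF p01 p11 x) :=
          fun x l => vl_update_low hk p01 p11 i hi ω x _ (countTrue_le l)
        simp only [Wval, htop, hvl]
        exact (Ssum_aff n k i ω).add (IsAff.const_mul β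
          (IsAff.sum _ _ fun l _ => IsAff.const_mul _
            ((ih _ _).comp_tau p01 p11)))
      · have hi' : n - k ≤ i.val := by omega
        have htop : ∀ x : ℝ, topCoords hk (Function.update ω i x)
            = Function.update (topCoords hk ω) ⟨i.val - (n - k), by
                have := i.isLt; omega⟩ x :=
          fun x => top_update_high hk i hi' ω x
        have hvl : ∀ (x : ℝ) (l : Fin k → Bool),
            vl k p01 p11 (Function.update ω i x) (countTrue l)
              = vl k p01 p11 ω (countTrue l) :=
          fun x l => vl_update_high hk p01 p11 i hi' ω x _ (countTrue_le l)
        simp only [Wval, htop, hvl]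
        exact (Ssum_aff n k i ω).add (IsAff.const_mul β
          (IsAff.sum _ _ fun l _ =>
            (qProb_aff (topCoords hk ω) _ l).mul_const _))

end SwapAux

/-- the adjacent-swap identity for `W_t`: for adjacent positions
`j, j+1`, any fixed other coordinates in `[0,1]`, and all `x, y ∈ [0,1]`,
`W_t(…,y,x,…) − W_t(…,x,y,…) = (x − y)·[W_t(…,0,1,…) − W_t(…,1,0,…)]`. -/
theorem W_swap_identity
    (n k T : ℕ) (hk1 : 1 ≤ k) (hkn : k ≤ n) (hT : 1 ≤ T)
    (p01 p11 β : ℝ)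
    (hp01 : p01 ∈ Set.Icc (0:ℝ) 1) (hp11 : p11 ∈ Set.Icc (0:ℝ) 1)
    (hβ : β ∈ Set.Icc (0:ℝ) 1)
    (t : ℕ) (ht1 : 1 ≤ t) (ht2 : t ≤ T)
    (j : ℕ) (hj : j + 1 < n) (ω : Fin n → ℝ)
    (hω : ∀ i : Fin n, i.val ≠ j → i.val ≠ j + 1 → ω i ∈ Set.Icc (0:ℝ) 1)
    (x y : ℝ) (hx : x ∈ Set.Icc (0:ℝ) 1) (hy : y ∈ Set.Icc (0:ℝ) 1) :
    Wval n k hkn p01 p11 β (T - t) (upd2 ω j hj y x) -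
        Wval n k hkn p01 p11 β (T - t) (upd2 ω j hj x y) =
      (x - y) *
        (Wval n k hkn p01 p11 β (T - t) (upd2 ω j hj 0 1) -
          Wval n k hkn p01 p11 β (T - t) (upd2 ω j hj 1 0)) := by
  set r := T - t with hr
  have hj0 : j < n := by omega
  have h12 : (⟨j, by omega⟩ : Fin n) ≠ ⟨j + 1, hj⟩ := by
    simp only [Ne, Fin.ext_iff, Fin.val_mk]; omega
  have haff2 : ∀ a b : ℝ,
      Wval n k hkn p01 p11 β r (upd2 ω j hj a b)
        = Wval n k hkn p01 p11 β r (upd2 ω j hj a 0)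
          + b * (Wval n k hkn p01 p11 β r (upd2 ω j hj a 1)
            - Wval n k hkn p01 p11 β r (upd2 ω j hj a 0)) := fun a b =>
    W_aff n k hkn p01 p11 β r ⟨j + 1, hj⟩ (Function.update ω ⟨j, by omega⟩ a) b
  have hcomm : ∀ a b : ℝ, upd2 ω j hj a b
      = Function.update (Function.update ω ⟨j + 1, hj⟩ b) ⟨j, by omega⟩ a := by
    intro a b
    rw [upd2, Function.update_comm h12]
  have haff1 : ∀ b a : ℝ,
      Wval n k hkn p01 p11 β r (upd2 ω j hj a b)
        = Wval n k hkn p01 p11 β r (upd2 ω j hj 0 b)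
          + a * (Wval n k hkn p01 p11 β r (upd2 ω j hj 1 b)
            - Wval n k hkn p01 p11 β r (upd2 ω j hj 0 b)) := by
    intro b a
    rw [hcomm a b, hcomm 0 b, hcomm 1 b]
    exact W_aff n k hkn p01 p11 β r ⟨j, by omega⟩ (Function.update ω ⟨j + 1, hj⟩ b) a
  have key : ∀ a b : ℝ,
      Wval n k hkn p01 p11 β r (upd2 ω j hj a b)
        = (Wval n k hkn p01 p11 β r (upd2 ω j hj 0 0)
            + a * (Wval n k hkn p01 p11 β r (upd2 ω j hj 1 0)
              - Wval n k hkn p01 p11 β r (upd2 ω j hj 0 0)))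
          + b * ((Wval n k hkn p01 p11 β r (upd2 ω j hj 0 1)
              + a * (Wval n k hkn p01 p11 β r (upd2 ω j hj 1 1)
                - Wval n k hkn p01 p11 β r (upd2 ω j hj 0 1)))
            - (Wval n k hkn p01 p11 β r (upd2 ω j hj 0 0)
              + a * (Wval n k hkn p01 p11 β r (upd2 ω j hj 1 0)
                - Wval n k hkn p01 p11 β r (upd2 ω j hj 0 0)))) := by
    intro a b
    rw [haff2 a b, haff1 0 a, haff1 1 a]
  rw [key y x, key x y]
  ring
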